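/- Let H be a Hilbert space, T : H → K a densely defined closed operator, and suppose there is a measurable-weight type estimate: a closed subspace N ⊆ H, a constant c > 0 such that ‖T η‖² ≥ c ‖η‖² for all η ∈ dom T ∩ N^⊥ (where N = ker T). Then for every b ∈ (ker T*)^⊥ ∩ K, i.e. b in the closure of range T, there exists a ∈ dom T with T a = b, a ⊥ ker T, and ‖a‖² ≤ c⁻¹ ‖b‖². -/

import Mathlib

/-!
The estimate makes `T` bounded below on `dom T ∩ (ker T)ᗮ`. As `T` is closed, the part of its
graph lying over `(ker T)ᗮ` is complete and the second projection is antilipschitz on it, so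
`range T` is closed. The condition `b ⊥ ker T†` says that `b` lies in `(range T)ᗮᗮ`, the closure
of `range T`, hence `b = T u`. Since `ker T` is closed, removing from `u` its projection onto
`ker T` gives the solution `a ⊥ ker T`, and its bound is the estimate itself.
-/

open scoped InnerProductSpace

namespace LinearPMap

variable {𝕜 E F : Type*} [RCLike 𝕜] [NormedAddCommGroup E] [InnerProductSpace 𝕜 E]
  [NormedAddCommGroup F] [InnerProductSpace 𝕜 F] {T : E →ₗ.[𝕜] F}

variable (T) in
def ker : Submodule 𝕜 E := (LinearMap.ker T.toFun).map T.domain.subtype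

theorem mem_ker_iff {x : E} : x ∈ T.ker ↔ ∃ u : T.domain, (u : E) = x ∧ T u = 0 := by
  simp only [ker, Submodule.mem_map, LinearMap.mem_ker, Submodule.coe_subtype, and_comm]
  rfl

theorem mem_ker_orthogonal_iff (η : T.domain) :
    (η : E) ∈ T.kerᗮ ↔ ∀ x : T.domain, T x = 0 → ⟪(η : E), (x : E)⟫_𝕜 = 0 := by
  simp only [Submodule.mem_orthogonal', mem_ker_iff]
  exact ⟨fun h x hx => h x ⟨x, rfl, hx⟩, fun h _ ⟨x, hxy, hx⟩ => hxy ▸ h x hx⟩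

theorem IsClosed.isClosed_ker (hT : T.IsClosed) : _root_.IsClosed (T.ker : Set E) := by
  have : (T.ker : Set E) = (fun x : E => (x, (0 : F))) ⁻¹' T.graph := by
    ext x
    simp [mem_ker_iff, mem_graph_iff]
  rw [this]
  exact hT.preimage (continuous_id.prodMk continuous_const)

theorem exists_mem_ker_orthogonal_apply_eq [T.ker.HasOrthogonalProjection] (u : T.domain) :
    ∃ η : T.domain, (η : E) ∈ T.kerᗮ ∧ T η = T u := by
  obtain ⟨w, hw, hperp⟩ := Submodule.HasOrthogonalProjection.exists_orthogonal (K := T.ker) u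
  obtain ⟨u₀, rfl, hu₀⟩ := mem_ker_iff.mp hw
  exact ⟨u - u₀, hperp, by rw [map_sub, hu₀, sub_zero]⟩

theorem exists_adjoint_eq_zero_of_mem_orthogonal_range [CompleteSpace E]
    (hT : Dense (T.domain : Set E)) {w : F} (hw : w ∈ (LinearMap.range T.toFun)ᗮ) :
    ∃ v : T†.domain, (v : F) = w ∧ T† v = 0 := by
  have hw' (u : T.domain) : ⟪(0 : E), (u : E)⟫_𝕜 = ⟪w, T u⟫_𝕜 := by
    rw [inner_zero_left]
    exact (Submodule.inner_left_of_mem_orthogonal (LinearMap.mem_range_self T.toFun u) hw).symm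
  have hdom : w ∈ T†.domain := mem_adjoint_domain_of_exists w ⟨0, hw'⟩
  exact ⟨⟨w, hdom⟩, rfl, adjoint_apply_eq hT ⟨w, hdom⟩ hw'⟩

theorem mem_topologicalClosure_range_of_orthogonal_ker_adjoint
    [CompleteSpace E] [CompleteSpace F] (hT : Dense (T.domain : Set E)) {b : F}
    (hb : ∀ v : T†.domain, T† v = 0 → ⟪(v : F), b⟫_𝕜 = 0) :
    b ∈ (LinearMap.range T.toFun).topologicalClosure := by
  rw [← Submodule.orthogonal_orthogonal_eq_closure, Submodule.mem_orthogonal]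
  intro w hw
  obtain ⟨v, rfl, hv⟩ := exists_adjoint_eq_zero_of_mem_orthogonal_range hT hw
  exact hb v hv

theorem IsClosed.isClosed_range_of_bound [CompleteSpace E] [CompleteSpace F] (hT : T.IsClosed)
    {C : ℝ} (hbound : ∀ η : T.domain, (η : E) ∈ T.kerᗮ → ‖(η : E)‖ ≤ C * ‖T η‖) :
    _root_.IsClosed (LinearMap.range T.toFun : Set F) := by
  have := hT.isClosed_ker.completeSpace_coe
  set G : Submodule 𝕜 (E × F) := T.graph ⊓ T.kerᗮ.prod ⊤
  have hG : _root_.IsClosed (G : Set (E × F)) :=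
    hT.inter (by simpa [Submodule.prod_coe] using T.ker.isClosed_orthogonal.prod isClosed_univ)
  have := hG.completeSpace_coe
  let f : G →L[𝕜] F := ContinuousLinearMap.snd 𝕜 E F ∘L G.subtypeL
  have hf : AntilipschitzWith (max C 1).toNNReal f := by
    refine f.antilipschitz_of_bound fun ⟨⟨x, y⟩, hgraph, hperp⟩ => ?_
    obtain ⟨u, rfl, rfl⟩ := T.mem_graph_iff.mp hgraph
    rw [Real.coe_toNNReal _ (le_max_of_le_right zero_le_one)]
    change max ‖(u : E)‖ ‖T u‖ ≤ max C 1 * ‖T u‖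
    refine max_le ((hbound u hperp.1).trans ?_) ?_
    · exact mul_le_mul_of_nonneg_right (le_max_left _ _) (norm_nonneg _)
    · exact le_mul_of_one_le_left (norm_nonneg _) (le_max_right _ _)
  have hrange : Set.range f = LinearMap.range T.toFun := by
    ext y
    constructor
    · rintro ⟨⟨⟨x, y⟩, hgraph, -⟩, rfl⟩
      obtain ⟨u, rfl, rfl⟩ := T.mem_graph_iff.mp hgraph
      exact ⟨u, rfl⟩
    · rintro ⟨u, rfl⟩
      obtain ⟨η, hη, hTη⟩ := exists_mem_ker_orthogonal_apply_eq u
      exact ⟨⟨((η : E), T η), T.mem_graph η, hη, trivial⟩, hTη⟩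
  rw [← hrange]
  exact hf.isClosed_range f.uniformContinuous

end LinearPMap

/-- Abstract Hörmander-type existence theorem: if the densely defined closed
operator `T` satisfies `‖T η‖² ≥ c ‖η‖²` for all `η ∈ dom T` orthogonal to
`ker T`, then every `b ⊥ ker T*` admits a solution `a ∈ dom T` of `T a = b`
with `a ⊥ ker T` and `‖a‖² ≤ c⁻¹ ‖b‖²`. -/
theorem stmt_14 {H K : Type*} [NormedAddCommGroup H] [InnerProductSpace ℂ H]
    [NormedAddCommGroup K] [InnerProductSpace ℂ K] [CompleteSpace H] [CompleteSpace K]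
    (T : H →ₗ.[ℂ] K) (hdense : Dense (T.domain : Set H)) (hclosed : T.IsClosed)
    (c : ℝ) (hc : 0 < c)
    (hcoer : ∀ η : T.domain,
      (∀ x : T.domain, T x = 0 → ⟪(η : H), (x : H)⟫_ℂ = 0) →
      c * ‖(η : H)‖ ^ 2 ≤ ‖T η‖ ^ 2)
    (b : K)
    (hb : ∀ v : T.adjoint.domain, T.adjoint v = 0 → ⟪(v : K), b⟫_ℂ = 0) :
    ∃ a : T.domain, T a = b ∧
      (∀ x : T.domain, T x = 0 → ⟪(a : H), (x : H)⟫_ℂ = 0) ∧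
      ‖(a : H)‖ ^ 2 ≤ c⁻¹ * ‖b‖ ^ 2 := by
  have hcoer' (η : T.domain) (hη : (η : H) ∈ T.kerᗮ) : c * ‖(η : H)‖ ^ 2 ≤ ‖T η‖ ^ 2 :=
    hcoer η ((T.mem_ker_orthogonal_iff η).mp hη)
  have hbound (η : T.domain) (hη : (η : H) ∈ T.kerᗮ) : ‖(η : H)‖ ≤ (√c)⁻¹ * ‖T η‖ := by
    rw [inv_mul_eq_div, le_div_iff₀ (Real.sqrt_pos.mpr hc)]
    refine (pow_le_pow_iff_left₀ (by positivity) (norm_nonneg _) two_ne_zero).mp ?_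
    rw [mul_pow, Real.sq_sqrt hc.le, mul_comm]
    exact hcoer' η hη
  have hb' : b ∈ LinearMap.range T.toFun := by
    rw [← (hclosed.isClosed_range_of_bound hbound).submodule_topologicalClosure_eq]
    exact LinearPMap.mem_topologicalClosure_range_of_orthogonal_ker_adjoint hdense hb
  obtain ⟨u, hu⟩ := hb'
  have := hclosed.isClosed_ker.completeSpace_coe
  obtain ⟨a, ha, hTa⟩ := T.exists_mem_ker_orthogonal_apply_eq u
  have hab : T a = b := hTa.trans hu
  refine ⟨a, hab, (T.mem_ker_orthogonal_iff a).mp ha, ?_⟩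
  rw [← hab, inv_mul_eq_div, le_div_iff₀' hc]
  exact hcoer' a ha
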